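/- For all real numbers θ₀, θ with 0 < θ₀ < θ < 1 there exists ε > 0 such that atanh(θ·r) ≥ (1+ε)·atanh(θ₀·r) for every r ∈ [0,1]. -/

import Mathlib

open Real

/-- the inverse hyperbolic tangent `atanh x = ½ log((1+x)/(1-x))`. -/
noncomputable def atanh (x : ℝ) : ℝ := (1 / 2) * Real.log ((1 + x) / (1 - x))

/-! All Taylor coefficients of `atanh x = ∑ x^(2k+1)/(2k+1)` are nonnegative and every monomial has
degree at least one, so for `c ≥ 1` and `x ≥ 0` the series of `atanh (c x)` dominates `c` times the
series of `atanh x` term by term. With `c = θ / θ₀` this gives the comparison with `ε = θ / θ₀ - 1`. -/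

theorem hasSum_atanh {x : ℝ} (hx : |x| < 1) :
    HasSum (fun k : ℕ => x ^ (2 * k + 1) / (2 * k + 1)) (atanh x) := by
  have hpos : 0 < 1 + x := by linarith [neg_abs_le x]
  have hneg : 0 < 1 - x := by linarith [le_abs_self x]
  rw [atanh, log_div hpos.ne' hneg.ne']
  have hterms : (fun k : ℕ => x ^ (2 * k + 1) / (2 * k + 1)) =
      fun k : ℕ => 1 / 2 * (2 * (1 / (2 * k + 1)) * x ^ (2 * k + 1)) := funext fun k => by ring
  rw [hterms]
  exact (hasSum_log_sub_log_of_abs_lt_one hx).mul_left (1 / 2)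

theorem mul_atanh_le_atanh_mul {c x : ℝ} (hc : 1 ≤ c) (hx : 0 ≤ x) (hcx : c * x < 1) :
    c * atanh x ≤ atanh (c * x) := by
  have hx_lt : x < 1 := by nlinarith
  refine hasSum_le (fun k => ?_) ((hasSum_atanh (abs_lt.2 ⟨by linarith, hx_lt⟩)).mul_left c)
    (hasSum_atanh (abs_lt.2 ⟨by nlinarith, hcx⟩))
  have hc_pow : c ≤ c ^ (2 * k + 1) := le_self_pow₀ hc (by omega)
  rw [mul_pow, mul_div_assoc]
  gcongr

/-- **Uniform comparison of BP update functions.**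
For `0 < θ₀ < θ < 1` there exists `ε > 0` with
`atanh(θ r) ≥ (1+ε)·atanh(θ₀ r)` for every `r ∈ [0,1]`. -/
theorem atanh_uniform_comparison (θ₀ θ : ℝ) (h0 : 0 < θ₀) (h1 : θ₀ < θ) (h2 : θ < 1) :
    ∃ ε > 0, ∀ r ∈ Set.Icc (0 : ℝ) 1, (1 + ε) * atanh (θ₀ * r) ≤ atanh (θ * r) := by
  have hratio : 1 < θ / θ₀ := (one_lt_div h0).2 h1
  refine ⟨θ / θ₀ - 1, sub_pos.2 hratio, fun r ⟨hr0, hr1⟩ => ?_⟩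
  have hscale : θ / θ₀ * (θ₀ * r) = θ * r := by field_simp
  have hθr : θ * r < 1 := by nlinarith
  rw [add_sub_cancel, ← hscale]
  exact mul_atanh_le_atanh_mul hratio.le (by positivity) (hscale ▸ hθr)
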